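/- Define H_B(σ,x) = ½(Erfc((x − (λ₁/λ₂)σ)/√(2σ)) + e^{2λ₁x/λ₂}·Erfc((x + (λ₁/λ₂)σ)/√(2σ))) for σ, x > 0 and λ₁, λ₂ > 0. Then 0 ≤ H_B(σ,x) ≤ 1 for all σ, x > 0, σ ↦ H_B(σ,x) is nondecreasing, and for any nonnegative integrable function q with ∫₀^∞ q(x) dx ≤ 1, the set {P > 0 : P ≥ ∫₀^∞ H_B(λ₂P, x) q(x) dx} is nonempty and its infimum J satisfies 0 ≤ J ≤ 1. -/

import Mathlib

/-!
Write `a = λ₁/λ₂`. Differentiating in `σ`, the two `Erfc` terms pick up the same Gaussian weight,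
since `e^{2ax} e^{-(x+aσ)²/2σ} = e^{-(x-aσ)²/2σ}`, and the derivative collapses to the
inverse-Gaussian first-passage density `x (2πσ³)^{-1/2} e^{-(x-aσ)²/2σ} > 0`. Hence `H_B(·, x)`
increases to its limit `½(Erfc(-∞) + e^{2ax} Erfc(∞)) = 1`, which bounds it by `1`; it is
nonnegative because `Erfc` decreases to `0`. Then `∫ H_B(λ₂, x) q(x) dx ≤ ∫ q ≤ 1`, so `P = 1`
lies in the (positive) set, and its infimum is in `[0, 1]`.
-/

open MeasureTheory Real

/-- The complementary error function `Erfc(x) = 1 − (2/√π)∫₀ˣ e^{−t²} dt`. -/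
noncomputable def Erfc (x : ℝ) : ℝ :=
  1 - (2 / Real.sqrt Real.pi) * ∫ t in (0:ℝ)..x, Real.exp (-t ^ 2)

/-- The first-passage cumulative distribution to the moving boundary
`t ↦ (lam₁/lam₂)t` for Brownian motion started at `x`. -/
noncomputable def HB (lam₁ lam₂ σ x : ℝ) : ℝ :=
  (1 / 2) * (Erfc ((x - (lam₁ / lam₂) * σ) / Real.sqrt (2 * σ)) +
    Real.exp (2 * lam₁ * x / lam₂) * Erfc ((x + (lam₁ / lam₂) * σ) / Real.sqrt (2 * σ)))

open Filter Topology Set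

theorem tendsto_integral_exp_neg_sq_atTop :
    Tendsto (fun y => ∫ t in (0:ℝ)..y, exp (-t ^ 2)) atTop (𝓝 (√π / 2)) := by
  have hIoi : ∫ t in Ioi (0:ℝ), exp (-t ^ 2) = √π / 2 := by
    simpa using integral_gaussian_Ioi 1
  exact hIoi ▸ intervalIntegral_tendsto_integral_Ioi 0
    (by simpa using (integrable_exp_neg_mul_sq one_pos).integrableOn) tendsto_id

theorem Erfc_neg (x : ℝ) : Erfc (-x) = 2 - Erfc x := by
  have hodd : ∫ t in (0:ℝ)..-x, exp (-t ^ 2) = -∫ t in (0:ℝ)..x, exp (-t ^ 2) := by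
    have h := intervalIntegral.integral_comp_neg (a := 0) (b := -x) fun t => exp (-t ^ 2)
    simp only [neg_sq, neg_neg, neg_zero] at h
    rw [h, intervalIntegral.integral_symm]
  simp only [Erfc, hodd]
  ring

theorem tendsto_Erfc_atTop : Tendsto Erfc atTop (𝓝 0) := by
  have h := (tendsto_integral_exp_neg_sq_atTop.const_mul (2 / √π)).const_sub 1
  have hlim : 1 - 2 / √π * (√π / 2) = 0 := by field_simp [(sqrt_pos.2 pi_pos).ne']; ring
  rwa [hlim] at h

theorem tendsto_Erfc_atBot : Tendsto Erfc atBot (𝓝 2) := by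
  have h := (tendsto_Erfc_atTop.comp tendsto_neg_atBot_atTop).const_sub 2
  simp only [sub_zero] at h
  refine h.congr fun x => ?_
  simp [Erfc_neg]

theorem hasDerivAt_Erfc (x : ℝ) : HasDerivAt Erfc (-(2 / √π * exp (-x ^ 2))) x := by
  have hcont : Continuous fun t : ℝ => exp (-t ^ 2) := by fun_prop
  exact ((intervalIntegral.integral_hasDerivAt_right (hcont.intervalIntegrable _ _)
    (hcont.stronglyMeasurableAtFilter _ _) hcont.continuousAt).const_mul _).const_sub 1

@[fun_prop]
theorem continuous_Erfc : Continuous Erfc :=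
  continuous_iff_continuousAt.2 fun x => (hasDerivAt_Erfc x).continuousAt

theorem strictAnti_Erfc : StrictAnti Erfc :=
  strictAnti_of_deriv_neg fun x => by
    rw [(hasDerivAt_Erfc x).deriv, neg_neg_iff_pos]
    have := sqrt_pos.2 pi_pos
    positivity

theorem Erfc_nonneg (x : ℝ) : 0 ≤ Erfc x :=
  strictAnti_Erfc.antitone.le_of_tendsto tendsto_Erfc_atTop x

theorem hasDerivAt_HB (lam₁ lam₂ x : ℝ) {σ : ℝ} (hσ : 0 < σ) :
    HasDerivAt (fun σ => HB lam₁ lam₂ σ x)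
      (x / (σ * √(2 * π * σ)) * exp (-(x - lam₁ / lam₂ * σ) ^ 2 / (2 * σ))) σ := by
  set a := lam₁ / lam₂
  set s := √(2 * σ) with hs_def
  have hs : 0 < s := sqrt_pos.2 (by positivity)
  have hs2 : s ^ 2 = 2 * σ := sq_sqrt (by positivity)
  have hsqrt : HasDerivAt (fun σ => √(2 * σ)) (1 / s) σ := by
    refine (((hasDerivAt_id' σ).const_mul 2).sqrt (by positivity)).congr_deriv ?_
    rw [← hs_def]
    field_simp
  have hu : HasDerivAt (fun σ => (x - a * σ) / √(2 * σ))
      ((-a * s - (x - a * σ) / s) / s ^ 2) σ := by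
    refine ((((hasDerivAt_id' σ).const_mul a).const_sub x).div hsqrt hs.ne').congr_deriv ?_
    ring
  have hv : HasDerivAt (fun σ => (x + a * σ) / √(2 * σ))
      ((a * s - (x + a * σ) / s) / s ^ 2) σ := by
    refine ((((hasDerivAt_id' σ).const_mul a).const_add x).div hsqrt hs.ne').congr_deriv ?_
    ring
  have hweight : exp (2 * lam₁ * x / lam₂) * exp (-((x + a * σ) / s) ^ 2)
      = exp (-((x - a * σ) / s) ^ 2) := by
    rw [← exp_add, div_pow, div_pow, hs2]
    congr 1
    field_simp
    ring
  refine ((((hasDerivAt_Erfc _).comp σ hu).add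
    (((hasDerivAt_Erfc _).comp σ hv).const_mul _)).const_mul (1 / 2)).congr_deriv ?_
  have hroot : √(2 * π * σ) = √π * s := by
    rw [hs_def, ← sqrt_mul pi_pos.le]; ring_nf
  calc _ = -(exp (-((x - a * σ) / s) ^ 2) / √π)
        * ((-a * s - (x - a * σ) / s) / s ^ 2 + (a * s - (x + a * σ) / s) / s ^ 2) := by
          rw [← hweight]; ring
    _ = _ := by
      rw [hroot, div_pow, hs2]
      field_simp
      ring

theorem strictMonoOn_HB (lam₁ lam₂ : ℝ) {x : ℝ} (hx : 0 < x) :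
    StrictMonoOn (fun σ => HB lam₁ lam₂ σ x) (Ioi 0) := by
  refine strictMonoOn_of_deriv_pos (convex_Ioi 0)
    (HasDerivAt.continuousOn fun σ hσ => hasDerivAt_HB lam₁ lam₂ x hσ) fun σ hσ => ?_
  rw [interior_Ioi] at hσ
  rw [(hasDerivAt_HB lam₁ lam₂ x hσ).deriv]
  have : 0 < σ := hσ
  positivity

theorem tendsto_add_mul_div_sqrt_atTop {a : ℝ} (ha : 0 < a) (x : ℝ) :
    Tendsto (fun σ => (x + a * σ) / √(2 * σ)) atTop atTop := by
  have hsqrt : Tendsto (fun σ : ℝ => √(2 * σ)) atTop atTop :=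
    tendsto_sqrt_atTop.comp (tendsto_id.const_mul_atTop two_pos)
  refine ((hsqrt.const_div_atTop x).add_atTop (hsqrt.const_mul_atTop (half_pos ha))).congr' ?_
  filter_upwards [eventually_gt_atTop 0] with σ hσ
  have hs : √(2 * σ) ^ 2 = 2 * σ := sq_sqrt (by positivity)
  have : 0 < √(2 * σ) := sqrt_pos.2 (by positivity)
  field_simp
  linear_combination a * hs

theorem tendsto_HB_atTop {lam₁ lam₂ : ℝ} (ha : 0 < lam₁ / lam₂) (x : ℝ) :
    Tendsto (fun σ => HB lam₁ lam₂ σ x) atTop (𝓝 1) := by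
  have hu : Tendsto (fun σ => (x - lam₁ / lam₂ * σ) / √(2 * σ)) atTop atBot := by
    refine (tendsto_neg_atTop_atBot.comp (tendsto_add_mul_div_sqrt_atTop ha (-x))).congr
      fun σ => ?_
    simp only [Function.comp]
    ring
  have h := ((tendsto_Erfc_atBot.comp hu).add
    ((tendsto_Erfc_atTop.comp (tendsto_add_mul_div_sqrt_atTop ha x)).const_mul
      (exp (2 * lam₁ * x / lam₂)))).const_mul (1 / 2)
  rwa [show (1 / 2 : ℝ) * (2 + exp (2 * lam₁ * x / lam₂) * 0) = 1 by norm_num] at h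

theorem HB_nonneg (lam₁ lam₂ σ x : ℝ) : 0 ≤ HB lam₁ lam₂ σ x := by
  unfold HB
  have := Erfc_nonneg ((x - lam₁ / lam₂ * σ) / √(2 * σ))
  have := Erfc_nonneg ((x + lam₁ / lam₂ * σ) / √(2 * σ))
  positivity

theorem HB_le_one {lam₁ lam₂ σ x : ℝ} (ha : 0 < lam₁ / lam₂) (hσ : 0 < σ) (hx : 0 < x) :
    HB lam₁ lam₂ σ x ≤ 1 :=
  ge_of_tendsto (tendsto_HB_atTop ha x) <| (eventually_ge_atTop σ).mono fun _ hτ =>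
    (strictMonoOn_HB lam₁ lam₂ hx).monotoneOn hσ (hσ.trans_le hτ) hτ

theorem continuous_HB (lam₁ lam₂ σ : ℝ) : Continuous fun x => HB lam₁ lam₂ σ x := by
  unfold HB
  fun_prop

theorem setIntegral_mul_le_of_le_one {α : Type*} [MeasurableSpace α] {μ : Measure α}
    {s : Set α} {f q : α → ℝ} (hs : MeasurableSet s) (hf : AEStronglyMeasurable f (μ.restrict s))
    (hf0 : ∀ x ∈ s, 0 ≤ f x) (hf1 : ∀ x ∈ s, f x ≤ 1) (hq0 : ∀ x ∈ s, 0 ≤ q x)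
    (hq : IntegrableOn q s μ) :
    ∫ x in s, f x * q x ∂μ ≤ ∫ x in s, q x ∂μ := by
  have hbound : ∀ᵐ x ∂μ.restrict s, ‖f x‖ ≤ 1 :=
    (ae_restrict_iff' hs).2 <| ae_of_all _ fun x hx => by
      rw [norm_eq_abs, abs_of_nonneg (hf0 x hx)]; exact hf1 x hx
  exact setIntegral_mono_on (hq.bdd_mul hf hbound) hq hs fun x hx =>
    mul_le_of_le_one_left (hq0 x hx) (hf1 x hx)

/-- `0 ≤ H_B ≤ 1`, `σ ↦ H_B(σ,x)` is nondecreasing, and for any sub-probability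
density `q`, the set `{P > 0 : P ≥ ∫₀^∞ H_B(lam₂P, x) q(x) dx}` is nonempty with
infimum `J ∈ [0,1]`. -/
theorem HB_properties (lam₁ lam₂ : ℝ) (hlam₁ : 0 < lam₁) (hlam₂ : 0 < lam₂) :
    (∀ σ x : ℝ, 0 < σ → 0 < x → 0 ≤ HB lam₁ lam₂ σ x ∧ HB lam₁ lam₂ σ x ≤ 1) ∧
    (∀ x : ℝ, 0 < x → MonotoneOn (fun σ => HB lam₁ lam₂ σ x) (Set.Ioi 0)) ∧
    ∀ q : ℝ → ℝ, (∀ x, 0 ≤ q x) → MeasureTheory.IntegrableOn q (Set.Ioi 0) →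
      (∫ x in Set.Ioi (0:ℝ), q x) ≤ 1 →
      ({P : ℝ | 0 < P ∧
          (∫ x in Set.Ioi (0:ℝ), HB lam₁ lam₂ (lam₂ * P) x * q x) ≤ P}).Nonempty ∧
        0 ≤ sInf {P : ℝ | 0 < P ∧
          (∫ x in Set.Ioi (0:ℝ), HB lam₁ lam₂ (lam₂ * P) x * q x) ≤ P} ∧
        sInf {P : ℝ | 0 < P ∧
          (∫ x in Set.Ioi (0:ℝ), HB lam₁ lam₂ (lam₂ * P) x * q x) ≤ P} ≤ 1 := by
  have ha : 0 < lam₁ / lam₂ := div_pos hlam₁ hlam₂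
  refine ⟨fun σ x hσ hx => ⟨HB_nonneg lam₁ lam₂ σ x, HB_le_one ha hσ hx⟩,
    fun x hx => (strictMonoOn_HB lam₁ lam₂ hx).monotoneOn, fun q hq0 hq hq1 => ?_⟩
  have hone : (1 : ℝ) ∈ {P : ℝ | 0 < P ∧
      (∫ x in Set.Ioi (0:ℝ), HB lam₁ lam₂ (lam₂ * P) x * q x) ≤ P} :=
    ⟨one_pos, (setIntegral_mul_le_of_le_one measurableSet_Ioi
      (continuous_HB lam₁ lam₂ _).aestronglyMeasurable (fun x _ => HB_nonneg _ _ _ x)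
      (fun _ hx => HB_le_one ha (by simpa using hlam₂) hx) (fun x _ => hq0 x) hq).trans hq1⟩
  exact ⟨⟨1, hone⟩, le_csInf ⟨1, hone⟩ fun P hP => hP.1.le,
    csInf_le ⟨0, fun P hP => hP.1.le⟩ hone⟩
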